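/- Let P_{Y|X} : Σ → Σ be a channel satisfying a strong data processing inequality for SKL with constant η < 1, i.e. SKL(P_{Y|X}∘P, P_{Y|X}∘Q) ≤ η·SKL(P,Q) for all distributions P, Q on Σ. If 4dν²η < 1, then for any message-passing algorithm under the multilevel noise model on the infinite d-ary tree, SKL(P_n⁺, P_n⁻) → 0 as n → ∞; hence reconstruction of the root label is impossible. -/

import Mathlib

open scoped BigOperators ENNReal

/-- The `a`-th term of the symmetrized KL divergence, valued in `ℝ≥0∞`, with the
convention that the term is `∞` when exactly one of the two masses vanishes. -/
noncomputable def sklTerm (x y : ℝ) : ℝ≥0∞ :=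
  if (x = 0) ↔ (y = 0) then ENNReal.ofReal ((x - y) * (Real.log x - Real.log y)) else ⊤

/-- Symmetrized KL divergence `SKL(P,Q) = KL(P,Q) + KL(Q,P)` between two pmfs on a
finite alphabet, valued in `ℝ≥0∞`. -/
noncomputable def SKLe {α : Type*} [Fintype α] (P Q : α → ℝ) : ℝ≥0∞ :=
  ∑ a, sklTerm (P a) (Q a)

/-- `P` is a probability mass function on the finite alphabet `α`. -/
def IsPMFf {α : Type*} [Fintype α] (P : α → ℝ) : Prop :=
  (∀ a, 0 ≤ P a) ∧ (∑ a, P a) = 1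

/-- Output distribution of the channel `W : α → α → ℝ` applied to input distribution `P`. -/
noncomputable def chanApp {α : Type*} [Fintype α] (W : α → α → ℝ) (P : α → ℝ) : α → ℝ :=
  fun b => ∑ a, P a * W a b

/-- Law of the root message of a noisy message-passing algorithm on the depth-`n`
`d`-ary broadcast tree with copy probability `1/2 + ν`, given root label `s`: each
child-to-parent message is passed through an independent copy of the noise channel `W`
before the level-`ℓ` reconstruction function `f ℓ` is applied. -/
noncomputable def noisyMsgLaw {α : Type*} [Fintype α] [DecidableEq α] (d : ℕ) (ν : ℝ)
    (W : α → α → ℝ) (leaf : Bool → α → ℝ) (f : ℕ → (Fin d → α) → α) :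
    ℕ → Bool → α → ℝ
  | 0, s => leaf s
  | n + 1, s => fun y => ∑ x : Fin d → α,
      if f (n + 1) x = y then
        ∏ i, chanApp W
          (fun a => (1 / 2 + ν) * noisyMsgLaw d ν W leaf f n s a
                    + (1 / 2 - ν) * noisyMsgLaw d ν W leaf f n (!s) a) (x i)
      else 0

open Real Filter Topology

/-!
Write `SKLₙ = SKL(Pₙ⁺, Pₙ⁻)`. One level of the recursion contracts it by `4dν²η`. The root message
is a deterministic function of the `d` noisy incoming messages, so by data processing (the map
`(x, y) ↦ (x - y)(log x - log y)` is subadditive, by the log-sum inequality) `SKLₙ₊₁` is at most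
the SKL between the joint laws of these messages. They are i.i.d. and SKL tensorizes, which costs
the factor `d`; each is the channel output of the mixture `(1/2 + ν)Pₙ^± + (1/2 - ν)Pₙ^∓`, which
costs `η` by the SDPI; and mixing two laws with weights `p ≥ q` contracts SKL pointwise by
`(p - q)² = 4ν²`. So `SKLₙ` decays geometrically from `n = 1` on, where it is finite because the
level-`0` mixtures have equal supports even if the leaf laws do not.
-/

noncomputable def sklReal (x y : ℝ) : ℝ := (x - y) * (log x - log y)

lemma sklReal_self (x : ℝ) : sklReal x x = 0 := by simp [sklReal]

lemma sklReal_nonneg {x y : ℝ} (hx : 0 ≤ x) (hy : 0 ≤ y) (h : x = 0 ↔ y = 0) :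
    0 ≤ sklReal x y := by
  rcases hx.eq_or_lt with rfl | hx
  · rw [h.1 rfl, sklReal_self]
  have hy : 0 < y := hy.lt_of_ne fun h0 => hx.ne' (h.2 h0.symm)
  rcases le_total x y with hxy | hxy
  · exact mul_nonneg_of_nonpos_of_nonpos (by linarith) (by linarith [log_le_log hx hxy])
  · exact mul_nonneg (by linarith) (by linarith [log_le_log hy hxy])

lemma add_mul_log_div_add_le {a b c d : ℝ} (ha : 0 < a) (hb : 0 < b) (hc : 0 < c) (hd : 0 < d) :
    (a + c) * log ((a + c) / (b + d)) ≤ a * log (a / b) + c * log (c / d) := by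
  have hbd : 0 < b + d := by positivity
  have hJensen := convexOn_mul_log.2 (Set.mem_Ici.2 (div_pos ha hb).le)
    (Set.mem_Ici.2 (div_pos hc hd).le) (div_pos hb hbd).le (div_pos hd hbd).le
    (by field_simp)
  have hmean : b / (b + d) * (a / b) + d / (b + d) * (c / d) = (a + c) / (b + d) := by
    field_simp
  simp only [smul_eq_mul, hmean] at hJensen
  calc (a + c) * log ((a + c) / (b + d))
      = (b + d) * ((a + c) / (b + d) * log ((a + c) / (b + d))) := by field_simp
    _ ≤ (b + d) * (b / (b + d) * (a / b * log (a / b)) + d / (b + d) * (c / d * log (c / d))) :=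
        mul_le_mul_of_nonneg_left hJensen hbd.le
    _ = a * log (a / b) + c * log (c / d) := by field_simp

lemma sklReal_eq_mul_log_div_add {x y : ℝ} (hx : 0 < x) (hy : 0 < y) :
    sklReal x y = x * log (x / y) + y * log (y / x) := by
  rw [sklReal, log_div hx.ne' hy.ne', log_div hy.ne' hx.ne']
  ring

lemma sklReal_add_le {a b c d : ℝ} (ha : 0 < a) (hb : 0 < b) (hc : 0 < c) (hd : 0 < d) :
    sklReal (a + c) (b + d) ≤ sklReal a b + sklReal c d := by
  rw [sklReal_eq_mul_log_div_add (by positivity) (by positivity), sklReal_eq_mul_log_div_add ha hb,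
    sklReal_eq_mul_log_div_add hc hd]
  linarith [add_mul_log_div_add_le ha hb hc hd, add_mul_log_div_add_le hb ha hd hc]

lemma log_mix_sub_log_mix_le {p q x y : ℝ} (hq : 0 ≤ q) (hqp : q ≤ p) (hpq : p + q = 1)
    (hy : 0 < y) (hyx : y ≤ x) :
    log (p * x + q * y) - log (p * y + q * x) ≤ (p - q) * (log x - log y) := by
  have hp : 0 < p := by linarith
  let F : ℝ → ℝ := fun t => (p - q) * log t - log (p * t + q * y) + log (p * y + q * t)
  let F' : ℝ → ℝ := fun t => (p - q) * t⁻¹ - p / (p * t + q * y) + q / (p * y + q * t)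
  have hF : ∀ t ∈ Set.Ioi (0 : ℝ), HasDerivAt F (F' t) t := by
    intro t (ht : 0 < t)
    have hA : HasDerivAt (fun t => p * t + q * y) p t := by
      simpa using ((hasDerivAt_id t).const_mul p).add_const (q * y)
    have hB : HasDerivAt (fun t => p * y + q * t) q t := by
      simpa using ((hasDerivAt_id t).const_mul q).const_add (p * y)
    have hA0 : p * t + q * y ≠ 0 := by positivity
    have hB0 : p * y + q * t ≠ 0 := by positivity
    exact (((hasDerivAt_log ht.ne').const_mul (p - q)).sub (hA.log hA0)).add (hB.log hB0)
  have hF'_nonneg : ∀ t ∈ Set.Ioi (0 : ℝ), 0 ≤ F' t := by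
    intro t (ht : 0 < t)
    have hA : 0 < p * t + q * y := by positivity
    have hB : 0 < p * y + q * t := by positivity
    have hF'_eq : F' t
        = (p - q) * (p * q * (t - y) ^ 2) / (t * (p * t + q * y) * (p * y + q * t)) := by
      simp only [F']
      obtain rfl : q = 1 - p := by linarith
      field_simp
      ring
    rw [hF'_eq]
    have : 0 ≤ p - q := by linarith
    positivity
  have hmono : MonotoneOn F (Set.Ioi 0) :=
    monotoneOn_of_hasDerivWithinAt_nonneg (convex_Ioi 0)
      (fun t ht => (hF t ht).continuousAt.continuousWithinAt)
      (fun t ht => (hF t (interior_subset ht)).hasDerivWithinAt)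
      (fun t ht => hF'_nonneg t (interior_subset ht))
  have hFyx : F y ≤ F x := hmono hy (hy.trans_le hyx) hyx
  simp only [F] at hFyx
  linarith

lemma sklReal_mix_le {p q x y : ℝ} (hq : 0 ≤ q) (hqp : q ≤ p) (hpq : p + q = 1)
    (hx : 0 < x) (hy : 0 < y) :
    sklReal (p * x + q * y) (p * y + q * x) ≤ (p - q) ^ 2 * sklReal x y := by
  have hpq' : 0 ≤ p - q := by linarith
  unfold sklReal
  rcases le_total y x with hyx | hxy
  · have h := mul_le_mul_of_nonneg_left (log_mix_sub_log_mix_le hq hqp hpq hy hyx)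
      (mul_nonneg hpq' (sub_nonneg.2 hyx))
    linear_combination h
  · have h := mul_le_mul_of_nonneg_left (log_mix_sub_log_mix_le hq hqp hpq hx hxy)
      (mul_nonneg hpq' (sub_nonneg.2 hxy))
    linear_combination h

lemma sklTerm_self (x : ℝ) : sklTerm x x = 0 := by simp [sklTerm]

lemma sklTerm_of_iff {x y : ℝ} (h : x = 0 ↔ y = 0) : sklTerm x y = ENNReal.ofReal (sklReal x y) :=
  if_pos h

lemma sklTerm_of_not_iff {x y : ℝ} (h : ¬(x = 0 ↔ y = 0)) : sklTerm x y = ⊤ :=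
  if_neg h

lemma sklTerm_add_le {x₁ y₁ x₂ y₂ : ℝ} (hx₁ : 0 ≤ x₁) (hy₁ : 0 ≤ y₁) (hx₂ : 0 ≤ x₂)
    (hy₂ : 0 ≤ y₂) : sklTerm (x₁ + x₂) (y₁ + y₂) ≤ sklTerm x₁ y₁ + sklTerm x₂ y₂ := by
  by_cases h₁ : x₁ = 0 ↔ y₁ = 0
  swap
  · simp [sklTerm_of_not_iff h₁]
  by_cases h₂ : x₂ = 0 ↔ y₂ = 0
  swap
  · simp [sklTerm_of_not_iff h₂]
  rcases hx₁.eq_or_lt with rfl | hx₁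
  · simp [h₁.1 rfl, sklTerm_self]
  rcases hx₂.eq_or_lt with rfl | hx₂
  · simp [h₂.1 rfl, sklTerm_self]
  have hy₁ : 0 < y₁ := hy₁.lt_of_ne fun h0 => hx₁.ne' (h₁.2 h0.symm)
  have hy₂ : 0 < y₂ := hy₂.lt_of_ne fun h0 => hx₂.ne' (h₂.2 h0.symm)
  rw [sklTerm_of_iff (iff_of_false (by positivity) (by positivity)), sklTerm_of_iff h₁,
    sklTerm_of_iff h₂, ← ENNReal.ofReal_add (sklReal_nonneg hx₁.le hy₁.le h₁)
      (sklReal_nonneg hx₂.le hy₂.le h₂)]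
  exact ENNReal.ofReal_le_ofReal (sklReal_add_le hx₁ hy₁ hx₂ hy₂)

lemma sklTerm_sum_le {β : Type*} (s : Finset β) {A B : β → ℝ} (hA : ∀ i, 0 ≤ A i)
    (hB : ∀ i, 0 ≤ B i) :
    sklTerm (∑ i ∈ s, A i) (∑ i ∈ s, B i) ≤ ∑ i ∈ s, sklTerm (A i) (B i) := by
  induction s using Finset.cons_induction with
  | empty => simp [sklTerm_self]
  | cons a s ha ih =>
    simp only [Finset.sum_cons]
    exact (sklTerm_add_le (hA a) (hB a) (Finset.sum_nonneg fun i _ => hA i)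
      (Finset.sum_nonneg fun i _ => hB i)).trans (add_le_add le_rfl ih)

lemma sklTerm_mix_le {p q x y : ℝ} (hq : 0 ≤ q) (hqp : q ≤ p) (hpq : p + q = 1) (hx : 0 ≤ x)
    (hy : 0 ≤ y) :
    sklTerm (p * x + q * y) (p * y + q * x) ≤ ENNReal.ofReal ((p - q) ^ 2) * sklTerm x y := by
  by_cases h : x = 0 ↔ y = 0
  swap
  · rcases hqp.eq_or_lt with rfl | hqp
    · simp [add_comm, sklTerm_self]
    · rw [sklTerm_of_not_iff h, ENNReal.mul_top (by simpa using sub_ne_zero.2 hqp.ne')]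
      exact le_top
  rcases hx.eq_or_lt with rfl | hx
  · simp [h.1 rfl, sklTerm_self]
  have hy : 0 < y := hy.lt_of_ne fun h0 => hx.ne' (h.2 h0.symm)
  have hp : 0 < p := by linarith
  rw [sklTerm_of_iff (iff_of_false (by positivity) (by positivity)), sklTerm_of_iff h,
    ← ENNReal.ofReal_mul (sq_nonneg _)]
  exact ENNReal.ofReal_le_ofReal (sklReal_mix_le hq hqp hpq hx hy)

section Distributions

variable {α β : Type*}

def mixture (p q : ℝ) (P Q : α → ℝ) : α → ℝ := fun a => p * P a + q * Q a

def iidLaw (d : ℕ) (Q : α → ℝ) : (Fin d → α) → ℝ := fun x => ∏ i, Q (x i)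

def pushforward [Fintype β] [DecidableEq α] (g : β → α) (R : β → ℝ) : α → ℝ :=
  fun y => ∑ x, if g x = y then R x else 0

lemma mixture_eq_zero_iff {p q : ℝ} (hp : 0 < p) (hq : 0 < q) {P Q : α → ℝ} (a : α)
    (hP : 0 ≤ P a) (hQ : 0 ≤ Q a) : mixture p q P Q a = 0 ↔ P a = 0 ∧ Q a = 0 := by
  rw [mixture, add_eq_zero_iff_of_nonneg (by positivity) (by positivity)]
  simp [hp.ne', hq.ne']

lemma mixture_eq_zero_iff_swap {p q : ℝ} (hp : 0 < p) (hq : 0 < q) {P Q : α → ℝ}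
    (hP : ∀ a, 0 ≤ P a) (hQ : ∀ a, 0 ≤ Q a) (a : α) :
    mixture p q P Q a = 0 ↔ mixture p q Q P a = 0 := by
  rw [mixture_eq_zero_iff hp hq a (hP a) (hQ a), mixture_eq_zero_iff hp hq a (hQ a) (hP a),
    and_comm]

lemma iidLaw_eq_zero_iff {d : ℕ} {Q : α → ℝ} (x : Fin d → α) :
    iidLaw d Q x = 0 ↔ ∃ i, Q (x i) = 0 := by
  simp [iidLaw, Finset.prod_eq_zero_iff]

lemma sklReal_iidLaw {d : ℕ} {A B : α → ℝ} (h : ∀ a, A a = 0 ↔ B a = 0) (x : Fin d → α) :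
    sklReal (iidLaw d A x) (iidLaw d B x)
      = ∑ i, (iidLaw d A x - iidLaw d B x) * (log (A (x i)) - log (B (x i))) := by
  by_cases hx : ∃ i, A (x i) = 0
  · have hA : iidLaw d A x = 0 := (iidLaw_eq_zero_iff x).2 hx
    have hB : iidLaw d B x = 0 := (iidLaw_eq_zero_iff x).2 (hx.imp fun i => (h _).1)
    simp [hA, hB, sklReal_self]
  · push Not at hx
    have hx' : ∀ i, B (x i) ≠ 0 := fun i hB => hx i ((h _).2 hB)
    rw [sklReal, ← Finset.mul_sum, Finset.sum_sub_distrib]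
    simp only [iidLaw, log_prod fun i _ => hx i, log_prod fun i _ => hx' i]

variable [Fintype α] [Fintype β]

namespace IsPMFf

lemma mixture {p q : ℝ} (hp : 0 ≤ p) (hq : 0 ≤ q) (hpq : p + q = 1) {P Q : α → ℝ}
    (hP : IsPMFf P) (hQ : IsPMFf Q) : IsPMFf (mixture p q P Q) := by
  refine ⟨fun a => by unfold _root_.mixture; have := hP.1 a; have := hQ.1 a; positivity, ?_⟩
  simp only [_root_.mixture, Finset.sum_add_distrib, ← Finset.mul_sum, hP.2, hQ.2, mul_one, hpq]

lemma chanApp {W : α → α → ℝ} (hW : ∀ a, IsPMFf (W a)) {P : α → ℝ} (hP : IsPMFf P) :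
    IsPMFf (chanApp W P) := by
  refine ⟨fun b => Finset.sum_nonneg fun a _ => mul_nonneg (hP.1 a) ((hW a).1 b), ?_⟩
  simp only [_root_.chanApp]
  rw [Finset.sum_comm]
  simp only [← Finset.mul_sum, (hW _).2, mul_one, hP.2]

lemma iidLaw (d : ℕ) {Q : α → ℝ} (hQ : IsPMFf Q) : IsPMFf (iidLaw d Q) := by
  refine ⟨fun x => Finset.prod_nonneg fun i _ => hQ.1 (x i), ?_⟩
  simp only [_root_.iidLaw, ← Fintype.prod_sum, hQ.2, Finset.prod_const_one]

lemma pushforward [DecidableEq α] (g : β → α) {R : β → ℝ} (hR : IsPMFf R) :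
    IsPMFf (pushforward g R) := by
  refine ⟨fun y => Finset.sum_nonneg fun x _ => ?_, ?_⟩
  · split_ifs
    exacts [hR.1 x, le_rfl]
  · simp only [_root_.pushforward]
    rw [Finset.sum_comm]
    simp [hR.2]

end IsPMFf

lemma chanApp_eq_zero_iff {W : α → α → ℝ} (hW : ∀ a, IsPMFf (W a)) {P : α → ℝ}
    (hP : ∀ a, 0 ≤ P a) (b : α) : chanApp W P b = 0 ↔ ∀ a, P a = 0 ∨ W a b = 0 := by
  rw [chanApp, Finset.sum_eq_zero_iff_of_nonneg fun a _ => mul_nonneg (hP a) ((hW a).1 b)]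
  simp

lemma chanApp_eq_zero_iff_of_eq_zero_iff {W : α → α → ℝ} (hW : ∀ a, IsPMFf (W a)) {P Q : α → ℝ}
    (hP : ∀ a, 0 ≤ P a) (hQ : ∀ a, 0 ≤ Q a) (h : ∀ a, P a = 0 ↔ Q a = 0) (b : α) :
    chanApp W P b = 0 ↔ chanApp W Q b = 0 := by
  simp only [chanApp_eq_zero_iff hW hP, chanApp_eq_zero_iff hW hQ, h]

lemma sum_iidLaw_mul_apply {d : ℕ} {Q : α → ℝ} (hQ : ∑ a, Q a = 1) (g : α → ℝ) (i : Fin d) :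
    ∑ x : Fin d → α, iidLaw d Q x * g (x i) = ∑ a, Q a * g a := by
  have hfactor : ∀ x : Fin d → α,
      iidLaw d Q x * g (x i) = ∏ j, Q (x j) * (if j = i then g (x j) else 1) := by
    intro x
    rw [Finset.prod_mul_distrib, Finset.prod_ite_eq', if_pos (Finset.mem_univ i), iidLaw]
  have hmarginal : ∀ j,
      ∑ a, Q a * (if j = i then g a else 1) = if j = i then ∑ a, Q a * g a else 1 := by
    intro j
    split_ifs <;> simp [hQ]
  simp only [hfactor]
  rw [← Fintype.prod_sum (fun j a => Q a * if j = i then g a else 1)]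
  simp only [hmarginal, Finset.prod_ite_eq', Finset.mem_univ, if_true]

lemma SKLe_ne_top {P Q : α → ℝ} (h : ∀ a, P a = 0 ↔ Q a = 0) : SKLe P Q ≠ ⊤ :=
  ENNReal.sum_ne_top.2 fun a _ => by rw [sklTerm_of_iff (h a)]; exact ENNReal.ofReal_ne_top

lemma SKLe_eq_ofReal_sum {P Q : α → ℝ} (hP : ∀ a, 0 ≤ P a) (hQ : ∀ a, 0 ≤ Q a)
    (h : ∀ a, P a = 0 ↔ Q a = 0) :
    SKLe P Q = ENNReal.ofReal (∑ a, sklReal (P a) (Q a)) := by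
  rw [SKLe, ENNReal.ofReal_sum_of_nonneg fun a _ => sklReal_nonneg (hP a) (hQ a) (h a)]
  exact Finset.sum_congr rfl fun a _ => sklTerm_of_iff (h a)

lemma SKLe_pushforward_le [DecidableEq α] (g : β → α) {A B : β → ℝ} (hA : ∀ x, 0 ≤ A x)
    (hB : ∀ x, 0 ≤ B x) : SKLe (pushforward g A) (pushforward g B) ≤ SKLe A B := by
  have hfiber : ∀ (R : β → ℝ) (y : α),
      pushforward g R y = ∑ x ∈ Finset.univ.filter (g · = y), R x := fun R y =>
    (Finset.sum_filter _ _).symm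
  calc SKLe (pushforward g A) (pushforward g B)
      ≤ ∑ y, ∑ x ∈ Finset.univ.filter (g · = y), sklTerm (A x) (B x) :=
        Finset.sum_le_sum fun y _ => by rw [hfiber, hfiber]; exact sklTerm_sum_le _ hA hB
    _ = SKLe A B := Finset.sum_fiberwise_of_maps_to (fun x _ => Finset.mem_univ (g x)) _

lemma SKLe_mixture_le {p q : ℝ} (hq : 0 ≤ q) (hqp : q ≤ p) (hpq : p + q = 1) {P Q : α → ℝ}
    (hP : ∀ a, 0 ≤ P a) (hQ : ∀ a, 0 ≤ Q a) :
    SKLe (mixture p q P Q) (mixture p q Q P) ≤ ENNReal.ofReal ((p - q) ^ 2) * SKLe P Q := by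
  rw [SKLe, SKLe, Finset.mul_sum]
  exact Finset.sum_le_sum fun a _ => sklTerm_mix_le hq hqp hpq (hP a) (hQ a)

lemma SKLe_iidLaw (d : ℕ) {A B : α → ℝ} (hA : IsPMFf A) (hB : IsPMFf B)
    (h : ∀ a, A a = 0 ↔ B a = 0) : SKLe (iidLaw d A) (iidLaw d B) = d * SKLe A B := by
  have hsupp : ∀ x : Fin d → α, iidLaw d A x = 0 ↔ iidLaw d B x = 0 := fun x => by
    simp only [iidLaw_eq_zero_iff, h]
  rw [SKLe_eq_ofReal_sum (hA.iidLaw d).1 (hB.iidLaw d).1 hsupp, SKLe_eq_ofReal_sum hA.1 hB.1 h,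
    ← ENNReal.ofReal_natCast, ← ENNReal.ofReal_mul d.cast_nonneg]
  congr 1
  calc ∑ x, sklReal (iidLaw d A x) (iidLaw d B x)
      = ∑ i : Fin d, (∑ x, iidLaw d A x * (log (A (x i)) - log (B (x i)))
          - ∑ x, iidLaw d B x * (log (A (x i)) - log (B (x i)))) := by
        simp only [sklReal_iidLaw h, ← Finset.sum_sub_distrib, ← sub_mul]
        exact Finset.sum_comm
    _ = ∑ _i : Fin d, ∑ a, sklReal (A a) (B a) := by
        refine Finset.sum_congr rfl fun i _ => ?_
        rw [sum_iidLaw_mul_apply hA.2 (fun a => log (A a) - log (B a)),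
          sum_iidLaw_mul_apply hB.2 (fun a => log (A a) - log (B a)), ← Finset.sum_sub_distrib]
        simp only [sklReal, sub_mul]
    _ = d * ∑ a, sklReal (A a) (B a) := by simp

end Distributions

lemma tendsto_zero_of_succ_le_mul {u : ℕ → ℝ≥0∞} {c : ℝ≥0∞} (hc : c < 1) (h₀ : u 0 ≠ ⊤)
    (h : ∀ n, u (n + 1) ≤ c * u n) : Tendsto u atTop (𝓝 0) := by
  have hgeom : ∀ n, u n ≤ c ^ n * u 0 := by
    intro n
    induction n with
    | zero => simp
    | succ n ih =>
      calc u (n + 1) ≤ c * u n := h n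
        _ ≤ c * (c ^ n * u 0) := by gcongr
        _ = c ^ (n + 1) * u 0 := by ring
  have hlim : Tendsto (fun n => c ^ n * u 0) atTop (𝓝 0) := by
    simpa using ENNReal.Tendsto.mul_const (ENNReal.tendsto_pow_atTop_nhds_zero_of_lt_one hc)
      (Or.inr h₀)
  exact tendsto_of_tendsto_of_tendsto_of_le_of_le tendsto_const_nhds hlim (fun _ => zero_le)
    hgeom

def HasSKLSDPI {α : Type*} [Fintype α] (W : α → α → ℝ) (η : ℝ) : Prop :=
  ∀ P Q : α → ℝ, IsPMFf P → IsPMFf Q →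
    SKLe (chanApp W P) (chanApp W Q) ≤ ENNReal.ofReal η * SKLe P Q

section NoisyMessagePassing

variable {α : Type*} [Fintype α] [DecidableEq α] {d : ℕ} {ν : ℝ} {W : α → α → ℝ}
  {leaf : Bool → α → ℝ} {f : ℕ → (Fin d → α) → α}

lemma SKLe_pushforward_iidLaw_chanApp_le (g : (Fin d → α) → α) (hW : ∀ a, IsPMFf (W a))
    {η : ℝ} (hSDPI : HasSKLSDPI W η)
    {M M' : α → ℝ} (hM : IsPMFf M) (hM' : IsPMFf M') (h : ∀ a, M a = 0 ↔ M' a = 0) :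
    SKLe (pushforward g (iidLaw d (chanApp W M))) (pushforward g (iidLaw d (chanApp W M')))
      ≤ d * (ENNReal.ofReal η * SKLe M M') :=
  calc _ ≤ SKLe (iidLaw d (chanApp W M)) (iidLaw d (chanApp W M')) :=
        SKLe_pushforward_le g ((hM.chanApp hW).iidLaw d).1 ((hM'.chanApp hW).iidLaw d).1
    _ = d * SKLe (chanApp W M) (chanApp W M') :=
        SKLe_iidLaw d (hM.chanApp hW) (hM'.chanApp hW)
          (chanApp_eq_zero_iff_of_eq_zero_iff hW hM.1 hM'.1 h)
    _ ≤ _ := by gcongr; exact hSDPI M M' hM hM'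

lemma noisyMsgLaw_succ (n : ℕ) (s : Bool) :
    noisyMsgLaw d ν W leaf f (n + 1) s = pushforward (f (n + 1)) (iidLaw d (chanApp W
      (mixture (1 / 2 + ν) (1 / 2 - ν) (noisyMsgLaw d ν W leaf f n s)
        (noisyMsgLaw d ν W leaf f n !s)))) := by
  rw [noisyMsgLaw]
  rfl

lemma isPMFf_noisyMsgLaw (hν : |ν| ≤ 1 / 2) (hW : ∀ a, IsPMFf (W a))
    (hleaf : ∀ s, IsPMFf (leaf s)) (n : ℕ) (s : Bool) :
    IsPMFf (noisyMsgLaw d ν W leaf f n s) := by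
  obtain ⟨hν₁, hν₂⟩ := abs_le.1 hν
  induction n generalizing s with
  | zero => exact hleaf s
  | succ n ih =>
    rw [noisyMsgLaw_succ]
    exact ((((ih s).mixture (by linarith) (by linarith) (by ring) (ih !s)).chanApp hW).iidLaw
      d).pushforward _

lemma SKLe_noisyMsgLaw_succ_le (hν : |ν| < 1 / 2) (hW : ∀ a, IsPMFf (W a)) {η : ℝ}
    (hSDPI : HasSKLSDPI W η) (hleaf : ∀ s, IsPMFf (leaf s)) (n : ℕ) :
    SKLe (noisyMsgLaw d ν W leaf f (n + 1) true) (noisyMsgLaw d ν W leaf f (n + 1) false)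
      ≤ d * (ENNReal.ofReal η *
        SKLe (mixture (1 / 2 + ν) (1 / 2 - ν) (noisyMsgLaw d ν W leaf f n true)
            (noisyMsgLaw d ν W leaf f n false))
          (mixture (1 / 2 + ν) (1 / 2 - ν) (noisyMsgLaw d ν W leaf f n false)
            (noisyMsgLaw d ν W leaf f n true))) := by
  obtain ⟨hν₁, hν₂⟩ := abs_lt.1 hν
  have hP := isPMFf_noisyMsgLaw (f := f) hν.le hW hleaf n
  have hM : ∀ s, IsPMFf (mixture (1 / 2 + ν) (1 / 2 - ν) (noisyMsgLaw d ν W leaf f n s)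
      (noisyMsgLaw d ν W leaf f n !s)) := fun s =>
    (hP s).mixture (by linarith) (by linarith) (by ring) (hP !s)
  rw [noisyMsgLaw_succ, noisyMsgLaw_succ]
  exact SKLe_pushforward_iidLaw_chanApp_le _ hW hSDPI (hM true) (hM false)
    (mixture_eq_zero_iff_swap (by linarith) (by linarith) (hP true).1 (hP false).1)

lemma SKLe_noisyMsgLaw_one_ne_top (hν : |ν| < 1 / 2) (hW : ∀ a, IsPMFf (W a)) {η : ℝ}
    (hSDPI : HasSKLSDPI W η) (hleaf : ∀ s, IsPMFf (leaf s)) :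
    SKLe (noisyMsgLaw d ν W leaf f 1 true) (noisyMsgLaw d ν W leaf f 1 false) ≠ ⊤ := by
  obtain ⟨hν₁, hν₂⟩ := abs_lt.1 hν
  have hP := isPMFf_noisyMsgLaw (f := f) hν.le hW hleaf 0
  refine ne_top_of_le_ne_top ?_ (SKLe_noisyMsgLaw_succ_le hν hW hSDPI hleaf 0)
  exact ENNReal.mul_ne_top (ENNReal.natCast_ne_top d) (ENNReal.mul_ne_top ENNReal.ofReal_ne_top
    (SKLe_ne_top (mixture_eq_zero_iff_swap (by linarith) (by linarith) (hP true).1 (hP false).1)))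

lemma SKLe_noisyMsgLaw_succ_le_mul (hν0 : 0 ≤ ν) (hν : ν < 1 / 2) (hW : ∀ a, IsPMFf (W a))
    {η : ℝ} (hSDPI : HasSKLSDPI W η)
    (hleaf : ∀ s, IsPMFf (leaf s)) (n : ℕ) :
    SKLe (noisyMsgLaw d ν W leaf f (n + 1) true) (noisyMsgLaw d ν W leaf f (n + 1) false)
      ≤ ENNReal.ofReal (4 * d * ν ^ 2 * η) *
        SKLe (noisyMsgLaw d ν W leaf f n true) (noisyMsgLaw d ν W leaf f n false) := by
  have hν' : |ν| < 1 / 2 := abs_lt.2 ⟨by linarith, hν⟩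
  have hP := isPMFf_noisyMsgLaw (f := f) hν'.le hW hleaf n
  have hrate : ENNReal.ofReal (4 * d * ν ^ 2 * η)
      = d * ENNReal.ofReal ((1 / 2 + ν - (1 / 2 - ν)) ^ 2) * ENNReal.ofReal η := by
    rw [← ENNReal.ofReal_natCast, ← ENNReal.ofReal_mul (by positivity),
      ← ENNReal.ofReal_mul (by positivity)]
    ring_nf
  calc _ ≤ _ := SKLe_noisyMsgLaw_succ_le hν' hW hSDPI hleaf n
    _ ≤ d * (ENNReal.ofReal η * (ENNReal.ofReal ((1 / 2 + ν - (1 / 2 - ν)) ^ 2) *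
          SKLe (noisyMsgLaw d ν W leaf f n true) (noisyMsgLaw d ν W leaf f n false))) := by
        gcongr
        exact SKLe_mixture_le (by linarith) (by linarith) (by ring) (hP true).1 (hP false).1
    _ = _ := by rw [hrate]; ring

end NoisyMessagePassing

theorem stmt2_general (d : ℕ) (ν : ℝ) (hν0 : 0 < ν) (hν : ν < 1 / 2)
    (α : Type*) [Fintype α] [DecidableEq α]
    (W : α → α → ℝ) (hW : ∀ a, IsPMFf (W a))
    (η : ℝ)
    (hSDPI : ∀ P Q : α → ℝ, IsPMFf P → IsPMFf Q →
      SKLe (chanApp W P) (chanApp W Q) ≤ ENNReal.ofReal η * SKLe P Q)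
    (hcrit : 4 * d * ν ^ 2 * η < 1)
    (leaf : Bool → α → ℝ) (hleaf : ∀ s, IsPMFf (leaf s))
    (f : ℕ → (Fin d → α) → α) :
    Filter.Tendsto
      (fun n => SKLe (noisyMsgLaw d ν W leaf f n true) (noisyMsgLaw d ν W leaf f n false))
      Filter.atTop (nhds 0) := by
  refine (tendsto_add_atTop_iff_nat 1).1 (tendsto_zero_of_succ_le_mul
    (ENNReal.ofReal_lt_one.2 hcrit) ?_ fun n => ?_)
  · exact SKLe_noisyMsgLaw_one_ne_top (abs_lt.2 ⟨by linarith, hν⟩) hW hSDPI hleaf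
  · exact SKLe_noisyMsgLaw_succ_le_mul hν0.le hν hW hSDPI hleaf (n + 1)

/-- If the noise channel satisfies an SDPI for SKL with constant `η < 1` and
`4dν²η < 1`, then for any noisy message-passing algorithm on the `d`-ary tree,
`SKL(Pₙ⁺, Pₙ⁻) → 0`; hence reconstruction of the root label is impossible. -/
theorem stmt2 (d : ℕ) (hd : 1 ≤ d) (ν : ℝ) (hν0 : 0 < ν) (hν : ν < 1 / 2)
    (α : Type*) [Fintype α] [DecidableEq α]
    (W : α → α → ℝ) (hW : ∀ a, IsPMFf (W a))
    (η : ℝ) (hη0 : 0 ≤ η) (hη1 : η < 1)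
    (hSDPI : ∀ P Q : α → ℝ, IsPMFf P → IsPMFf Q →
      SKLe (chanApp W P) (chanApp W Q) ≤ ENNReal.ofReal η * SKLe P Q)
    (hcrit : 4 * d * ν ^ 2 * η < 1)
    (leaf : Bool → α → ℝ) (hleaf : ∀ s, IsPMFf (leaf s))
    (f : ℕ → (Fin d → α) → α) :
    Filter.Tendsto
      (fun n => SKLe (noisyMsgLaw d ν W leaf f n true) (noisyMsgLaw d ν W leaf f n false))
      Filter.atTop (nhds 0) :=
  stmt2_general d ν hν0 hν α W hW η hSDPI hcrit leaf hleaf f
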